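/- The Riesz logarithmic kernel G_n(u) = (1/l_n) Σ_{i=0}^n D_i(u)/(i+1), where D_i is the Dirichlet kernel and l_n = Σ_{i=0}^n 1/(i+1), satisfies sup_n ∫_T |G_n(u)| du < ∞, i.e., the L¹ norms of the kernels G_n are uniformly bounded. -/

import Mathlib

noncomputable section
open MeasureTheory Real Filter Set

/-- l_n = Σ_{k=0}^n 1/(k+1). -/
def logSum (n : ℕ) : ℝ := ∑ k ∈ Finset.range (n + 1), (1 : ℝ) / (k + 1)

/-- Dirichlet kernel D_k(u) = sin((k+1/2)u)/sin(u/2). -/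
def dirichlet (k : ℕ) (u : ℝ) : ℝ := Real.sin (((k : ℝ) + 1 / 2) * u) / Real.sin (u / 2)

/-- Riesz logarithmic kernel G_n(u) = (1/l_n) Σ_{i=0}^n D_i(u)/(i+1). -/
def rieszKer (n : ℕ) (u : ℝ) : ℝ :=
  (1 / logSum n) * ∑ i ∈ Finset.range (n + 1), dirichlet i u / ((i : ℝ) + 1)

/-!
The Riesz kernel is nonnegative: the partial sums of the Dirichlet kernels are
Fejér's squares `(sin (m u / 2) / sin (u / 2))²`, and Abel summation against the
decreasing weights `1 / (i + 1)` preserves nonnegativity. Hence `∫ |G_n| = ∫ G_n`,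
and since every `D_i` integrates to `2π` over a period, `∫ G_n = 2π` for all `n`.
-/

open Finset

theorem Finset.sum_range_mul_nonneg_of_antitone {a b : ℕ → ℝ}
    (ha : ∀ m, 0 ≤ ∑ i ∈ range m, a i) (hb : Antitone b) (hb₀ : ∀ i, 0 ≤ b i) (n : ℕ) :
    0 ≤ ∑ i ∈ range n, a i * b i := by
  suffices h : ∀ m, b m * ∑ i ∈ range m, a i ≤ ∑ i ∈ range m, a i * b i from
    (mul_nonneg (hb₀ n) (ha n)).trans (h n)
  intro m
  induction m with
  | zero => simp
  | succ m ih =>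
    calc b (m + 1) * ∑ i ∈ range (m + 1), a i
        ≤ b m * ∑ i ∈ range (m + 1), a i := by
          gcongr
          · exact ha _
          · exact hb m.le_succ
      _ = b m * ∑ i ∈ range m, a i + a m * b m := by rw [sum_range_succ]; ring
      _ ≤ ∑ i ∈ range (m + 1), a i * b i := by rw [sum_range_succ]; linarith

lemma logSum_pos (n : ℕ) : 0 < logSum n :=
  sum_pos (fun i _ => by positivity) ⟨0, by simp⟩

lemma dirichlet_eq_one_add_two_mul_sum_cos {u : ℝ} (hu : sin (u / 2) ≠ 0) (k : ℕ) :
    dirichlet k u = 1 + 2 * ∑ j ∈ range k, cos ((j + 1) * u) := by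
  induction k with
  | zero => simp [dirichlet, inv_mul_eq_div, hu]
  | succ k ih =>
    have hsin : sin ((k + 1 + 1 / 2) * u) - sin ((k + 1 / 2) * u)
        = 2 * cos ((k + 1) * u) * sin (u / 2) := by
      rw [sin_sub_sin]; ring_nf
    rw [sum_range_succ, mul_add, ← add_assoc, ← ih, dirichlet, dirichlet, Nat.cast_succ,
      div_add' _ _ _ hu]
    congr 1
    linarith

/-- Fejér's identity; both sides are `0` where `sin (u / 2) = 0`. -/
lemma sum_range_dirichlet (m : ℕ) (u : ℝ) :
    ∑ i ∈ range m, dirichlet i u = (sin (m * u / 2) / sin (u / 2)) ^ 2 := by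
  have htel : (∑ i ∈ range m, sin ((i + 1 / 2) * u)) * sin (u / 2) = sin (m * u / 2) ^ 2 := by
    induction m with
    | zero => simp
    | succ m ih =>
      have hcos : cos (m * u) - cos ((m + 1) * u) = 2 * sin ((m + 1 / 2) * u) * sin (u / 2) := by
        rw [cos_sub_cos, show (m * u - (m + 1) * u) / 2 = -(u / 2) by ring, sin_neg]; ring_nf
      rw [sum_range_succ, add_mul, ih, sin_sq_eq_half_sub, sin_sq_eq_half_sub]
      push_cast
      ring_nf at hcos ⊢
      linarith
  by_cases hu : sin (u / 2) = 0
  · simp [dirichlet, hu]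
  · rw [div_pow, ← htel, sq, ← div_div, mul_div_cancel_right₀ _ hu, sum_div]
    rfl

lemma sum_range_dirichlet_nonneg (m : ℕ) (u : ℝ) : 0 ≤ ∑ i ∈ range m, dirichlet i u := by
  rw [sum_range_dirichlet]; positivity

lemma rieszKer_nonneg (n : ℕ) (u : ℝ) : 0 ≤ rieszKer n u := by
  refine mul_nonneg (one_div_pos.2 (logSum_pos n)).le ?_
  simp_rw [div_eq_mul_inv]
  exact sum_range_mul_nonneg_of_antitone (sum_range_dirichlet_nonneg · u)
    (fun i j hij => by gcongr) (fun i => by positivity) _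

lemma dirichlet_ae_eq (k : ℕ) :
    dirichlet k =ᵐ[volume] fun u => 1 + 2 * ∑ j ∈ range k, cos ((j + 1) * u) := by
  have hzeros : {u : ℝ | sin (u / 2) = 0}.Countable :=
    (countable_range fun n : ℤ => 2 * (n * π)).mono fun u hu => by
      obtain ⟨n, hn⟩ := sin_eq_zero_iff.1 hu
      exact ⟨n, by simp only [hn]; ring⟩
  filter_upwards [measure_eq_zero_iff_ae_notMem.1 (hzeros.measure_zero volume)] with u hu
  exact dirichlet_eq_one_add_two_mul_sum_cos hu k

lemma integral_cos_nat_succ_mul (j : ℕ) : ∫ u in -π..π, cos ((j + 1) * u) = 0 := by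
  have hsin : sin ((j + 1) * π) = 0 := by exact_mod_cast sin_nat_mul_pi (j + 1)
  rw [intervalIntegral.integral_comp_mul_left (fun x => cos x) (by positivity), integral_cos,
    mul_neg, sin_neg, hsin]
  simp

lemma integral_dirichlet (k : ℕ) : ∫ u in -π..π, dirichlet k u = 2 * π := by
  rw [intervalIntegral.integral_congr_ae ((dirichlet_ae_eq k).mono fun u hu _ => hu),
    intervalIntegral.integral_add intervalIntegrable_const
      ((by fun_prop : Continuous _).intervalIntegrable _ _),
    intervalIntegral.integral_const_mul, intervalIntegral.integral_finsetSum
      fun j _ => (by fun_prop : Continuous _).intervalIntegrable _ _]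
  simp [integral_cos_nat_succ_mul]
  ring

lemma intervalIntegrable_dirichlet (k : ℕ) (a b : ℝ) :
    IntervalIntegrable (dirichlet k) volume a b :=
  (Continuous.intervalIntegrable (by fun_prop) a b).congr_ae
    (ae_restrict_of_ae (dirichlet_ae_eq k).symm)

lemma integral_rieszKer (n : ℕ) : ∫ u in -π..π, rieszKer n u = 2 * π := by
  unfold rieszKer
  rw [intervalIntegral.integral_const_mul, intervalIntegral.integral_finsetSum
    fun i _ => (intervalIntegrable_dirichlet i _ _).div_const _]
  simp_rw [intervalIntegral.integral_div, integral_dirichlet, ← mul_one_div (2 * π), ← mul_sum]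
  rw [← logSum]
  field_simp [(logSum_pos n).ne']

theorem riesz_kernel_uniform_L1_bound :
    ∃ C : ℝ, ∀ n : ℕ,
      (∫ u in Set.Icc (-Real.pi) Real.pi, |rieszKer n u|) ≤ C := by
  refine ⟨2 * π, fun n => le_of_eq ?_⟩
  simp_rw [abs_of_nonneg (rieszKer_nonneg n _)]
  rw [integral_Icc_eq_integral_Ioc, ← intervalIntegral.integral_of_le (by linarith [pi_pos]),
    integral_rieszKer]
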